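/- arXiv:1707.05662 — 2 statements merged into one kernel-verified Lean document; each statement's English description precedes it below -/
import Mathlib

section
/- For the function f(l) = (p^{−l} − 1)/l² with fixed p ∈ (0,1), defined for l > 0: f is convex on (0,∞), attains its global minimum at l̄ = −C/ln(p) where C = 2 + W(−2/e²) ≈ 1.59362, and its minimum value is f(l̄) = ((e^C − 1)/C²)·(ln p)². -/
/-!
Write `a = -log p > 0`, so that `p ^ (-l) = exp (a * l)`. With `t = a * l`, the function
`l ↦ (exp (a * l) - 1) / l ^ 2` has first derivative `((t - 2) * exp t + 2) / l ^ 3` and second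
derivative `((t ^ 2 - 4 * t + 6) * exp t - 6) / l ^ 4`, which is nonnegative for `t ≥ 0`.
Hence the function is convex on `(0, ∞)`, and since its derivative vanishes where `t = C`,
the point `l̄ = C / a` is a global minimizer, with value `a ^ 2 * (exp C - 1) / C ^ 2`.
-/

open Real Set

lemma six_le_mul_exp_of_nonneg {t : ℝ} (ht : 0 ≤ t) : 6 ≤ (t ^ 2 - 4 * t + 6) * exp t := by
  have htaylor : ∑ i ∈ Finset.range 5, t ^ i / i.factorial ≤ exp t := sum_le_exp_of_nonneg ht 5
  simp only [Finset.sum_range_succ, Finset.sum_range_zero, Nat.factorial] at htaylor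
  norm_num at htaylor
  have hq : 0 < t ^ 2 - 4 * t + 6 := by nlinarith [sq_nonneg (t - 2)]
  -- the quadratic times the Taylor polynomial of degree 4 is `6 + 2t + t⁴/12 + t⁶/24`
  nlinarith [mul_le_mul_of_nonneg_left htaylor hq.le, pow_nonneg ht 4, pow_nonneg ht 6]

section ExpSubOneDivSq

variable {a l : ℝ}

lemma hasDerivAt_exp_sub_one_div_sq (hl : l ≠ 0) :
    HasDerivAt (fun l : ℝ => (exp (a * l) - 1) / l ^ 2)
      (((a * l - 2) * exp (a * l) + 2) / l ^ 3) l := by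
  have hexp : HasDerivAt (fun l : ℝ => exp (a * l)) (exp (a * l) * a) l := by
    simpa using ((hasDerivAt_id l).const_mul a).exp
  refine ((hexp.sub_const 1).fun_div (hasDerivAt_pow 2 l) (pow_ne_zero 2 hl)).congr_deriv ?_
  field_simp
  ring

lemma hasDerivAt_sub_two_mul_exp_add_two_div_cube (hl : l ≠ 0) :
    HasDerivAt (fun l : ℝ => ((a * l - 2) * exp (a * l) + 2) / l ^ 3)
      ((((a * l) ^ 2 - 4 * (a * l) + 6) * exp (a * l) - 6) / l ^ 4) l := by
  have hexp : HasDerivAt (fun l : ℝ => exp (a * l)) (exp (a * l) * a) l := by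
    simpa using ((hasDerivAt_id l).const_mul a).exp
  have hlin : HasDerivAt (fun l : ℝ => a * l - 2) a l := by
    simpa using ((hasDerivAt_id l).const_mul a).sub_const 2
  refine (((hlin.fun_mul hexp).add_const 2).fun_div (hasDerivAt_pow 3 l)
    (pow_ne_zero 3 hl)).congr_deriv ?_
  field_simp
  ring

lemma convexOn_exp_sub_one_div_sq (ha : 0 ≤ a) :
    ConvexOn ℝ (Ioi 0) (fun l : ℝ => (exp (a * l) - 1) / l ^ 2) := by
  refine convexOn_of_hasDerivWithinAt2_nonneg (convex_Ioi 0)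
    (f' := fun l => ((a * l - 2) * exp (a * l) + 2) / l ^ 3)
    (f'' := fun l => (((a * l) ^ 2 - 4 * (a * l) + 6) * exp (a * l) - 6) / l ^ 4)
    (ContinuousOn.div (by fun_prop) (by fun_prop) fun x hx => pow_ne_zero 2 (ne_of_gt hx))
    ?_ ?_ ?_ <;> rw [interior_Ioi] <;> intro x (hx : 0 < x)
  · exact (hasDerivAt_exp_sub_one_div_sq hx.ne').hasDerivWithinAt
  · exact (hasDerivAt_sub_two_mul_exp_add_two_div_cube hx.ne').hasDerivWithinAt
  · have := six_le_mul_exp_of_nonneg (mul_nonneg ha hx.le)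
    exact div_nonneg (by linarith) (by positivity)

lemma isMinOn_exp_sub_one_div_sq {C : ℝ} (ha : 0 < a) (hC : (C - 2) * exp C = -2)
    (hC0 : 0 < C) :
    IsMinOn (fun l : ℝ => (exp (a * l) - 1) / l ^ 2) (Ioi 0) (C / a) := by
  have hl : 0 < C / a := div_pos hC0 ha
  have hderiv := hasDerivAt_exp_sub_one_div_sq (a := a) hl.ne'
  rw [mul_div_cancel₀ C ha.ne', hC, neg_add_cancel, zero_div] at hderiv
  refine (convexOn_exp_sub_one_div_sq ha.le).isMinOn_of_rightDeriv_eq_zero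
    (by rwa [interior_Ioi]) ?_
  exact hderiv.hasDerivWithinAt.derivWithin (uniqueDiffWithinAt_Ioi _)

end ExpSubOneDivSq

theorem f_convex_min_general (p C : ℝ) (hp0 : 0 < p) (hp1 : p < 1)
    (hC : (C - 2) * Real.exp C = -2) (hC0 : 0 < C) :
    ConvexOn ℝ (Set.Ioi (0 : ℝ)) (fun l : ℝ => (p ^ (-l) - 1) / l ^ 2) ∧
      (∀ l ∈ Set.Ioi (0 : ℝ),
        (p ^ (-(-C / Real.log p)) - 1) / (-C / Real.log p) ^ 2 ≤
          (p ^ (-l) - 1) / l ^ 2) ∧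
      (p ^ (-(-C / Real.log p)) - 1) / (-C / Real.log p) ^ 2 =
        ((Real.exp C - 1) / C ^ 2) * (Real.log p) ^ 2 := by
  have ha : 0 < -log p := neg_pos.mpr (log_neg hp0 hp1)
  have hrpow : ∀ l : ℝ, p ^ (-l) = exp (-log p * l) := fun l => by
    rw [rpow_def_of_pos hp0, neg_mul_comm]
  have hbar : -C / log p = C / -log p := by rw [div_neg, neg_div]
  simp only [hrpow, hbar]
  refine ⟨convexOn_exp_sub_one_div_sq ha.le, isMinOn_exp_sub_one_div_sq ha hC hC0, ?_⟩
  rw [mul_div_cancel₀ C ha.ne']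
  field_simp

/-- For fixed `p ∈ (0,1)`, the function `f(l) = (p^(-l) - 1)/l²` is convex on
    `(0,∞)`, attains its global minimum on `(0,∞)` at `l̄ = -C/ln p`, where
    `C = 2 + W(-2/e²)` (so `(C-2)·e^C = -2`, `0 < C < 2`), with minimum value
    `((e^C - 1)/C²)·(ln p)²`. -/
theorem f_convex_min (p C : ℝ) (hp0 : 0 < p) (hp1 : p < 1)
    (hC : (C - 2) * Real.exp C = -2) (hC0 : 0 < C) (hC2 : C < 2) :
    ConvexOn ℝ (Set.Ioi (0 : ℝ)) (fun l : ℝ => (p ^ (-l) - 1) / l ^ 2) ∧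
      (∀ l ∈ Set.Ioi (0 : ℝ),
        (p ^ (-(-C / Real.log p)) - 1) / (-C / Real.log p) ^ 2 ≤
          (p ^ (-l) - 1) / l ^ 2) ∧
      (p ^ (-(-C / Real.log p)) - 1) / (-C / Real.log p) ^ 2 =
        ((Real.exp C - 1) / C ^ 2) * (Real.log p) ^ 2 :=
  f_convex_min_general p C hp0 hp1 hC hC0
end

section
/- Let X ~ N(μ₁, σ²) and Y ~ N(μ₂, σ²) be two normal distributions with the same variance σ² > 0. Then their total variation distance equals erf(|μ₁ − μ₂|/(2√2·σ)). -/
/-- The Gauss error function `erf(x) = (2/√π) ∫₀ˣ e^{-t²} dt`. -/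
noncomputable def erf (x : ℝ) : ℝ :=
  (2 / Real.sqrt Real.pi) * ∫ t in (0 : ℝ)..x, Real.exp (-t ^ 2)

/-- The density of the normal distribution `N(μ, σ²)`. -/
noncomputable def normalPDF (μ σ x : ℝ) : ℝ :=
  (1 / (σ * Real.sqrt (2 * Real.pi))) * Real.exp (-(x - μ) ^ 2 / (2 * σ ^ 2))

/-! The densities `f₁, f₂` are mirror images of each other in the midpoint `m` of the means, so
`f₁ ≥ f₂` exactly on `(-∞, m]`, and as both have mass one, `∫ |f₁ - f₂| = 2 ∫_{(-∞, m]} (f₁ - f₂)`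
(Scheffé). Translating `f₂` onto `f₁` turns the right side into twice the integral of `f₁` over an
interval of length `|μ₁ - μ₂|` centred at `μ₁`, which the antiderivative
`x ↦ erf ((x - μ₁) / (√2 σ)) / 2` of `f₁` and the oddness of `erf` evaluate. -/

open MeasureTheory ProbabilityTheory Real Set

theorem integral_abs_sub_eq_two_mul_setIntegral_sub {X : Type*} [MeasurableSpace X]
    {μ : Measure X} {f g : X → ℝ} {s : Set X} (hf : Integrable f μ) (hg : Integrable g μ)
    (hfg : ∫ x, f x ∂μ = ∫ x, g x ∂μ) (hs : MeasurableSet s)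
    (hle : ∀ x ∈ s, g x ≤ f x) (hge : ∀ x ∉ s, f x ≤ g x) :
    ∫ x, |f x - g x| ∂μ = 2 * ∫ x in s, (f x - g x) ∂μ := by
  have hint : Integrable (fun x => f x - g x) μ := hf.sub hg
  have hint_abs : Integrable (fun x => |f x - g x|) μ := hint.abs
  have on_s : ∫ x in s, |f x - g x| ∂μ = ∫ x in s, (f x - g x) ∂μ :=
    setIntegral_congr_fun hs fun x hx => abs_of_nonneg (sub_nonneg.2 (hle x hx))
  have on_compl : ∫ x in sᶜ, |f x - g x| ∂μ = -∫ x in sᶜ, (f x - g x) ∂μ := by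
    rw [← integral_neg]
    exact setIntegral_congr_fun hs.compl fun x hx => abs_of_nonpos (sub_nonpos.2 (hge x hx))
  have total : ∫ x, (f x - g x) ∂μ = 0 := by rw [integral_sub hf hg, hfg, sub_self]
  have split := integral_add_compl hs hint
  have split_abs := integral_add_compl hs hint_abs
  linarith

theorem erf_neg (x : ℝ) : erf (-x) = -erf x := by
  have : ∫ t in (0 : ℝ)..-x, rexp (-t ^ 2) = -∫ t in (0 : ℝ)..x, rexp (-t ^ 2) := by
    rw [intervalIntegral.integral_symm, ← neg_zero,
      ← intervalIntegral.integral_comp_neg fun t => rexp (-t ^ 2)]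
    simp only [neg_sq, neg_zero]
  rw [erf, erf, this, mul_neg]

theorem normalPDF_eq_gaussianPDFReal (μ : ℝ) {σ : ℝ} (hσ : 0 < σ) :
    normalPDF μ σ = gaussianPDFReal μ (σ ^ 2).toNNReal := by
  ext x
  have hsq : Real.sqrt (2 * π * σ ^ 2) = σ * Real.sqrt (2 * π) := by
    rw [mul_comm, Real.sqrt_mul (sq_nonneg σ), Real.sqrt_sq hσ.le]
  simp [normalPDF, gaussianPDFReal, Real.coe_toNNReal _ (sq_nonneg σ), hsq]

theorem integrable_normalPDF (μ : ℝ) {σ : ℝ} (hσ : 0 < σ) : Integrable (normalPDF μ σ) := by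
  rw [normalPDF_eq_gaussianPDFReal μ hσ]
  exact integrable_gaussianPDFReal _ _

theorem integral_normalPDF_eq_one (μ : ℝ) {σ : ℝ} (hσ : 0 < σ) : ∫ x, normalPDF μ σ x = 1 := by
  rw [normalPDF_eq_gaussianPDFReal μ hσ]
  exact integral_gaussianPDFReal_eq_one _ (by simpa using hσ.ne')

theorem normalPDF_le_normalPDF {μ₁ μ₂ σ x : ℝ} (hσ : 0 ≤ σ) (h : |x - μ₁| ≤ |x - μ₂|) :
    normalPDF μ₂ σ x ≤ normalPDF μ₁ σ x := by
  unfold normalPDF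
  gcongr _ * rexp (-?_ / _)
  exact sq_le_sq.2 h

theorem normalPDF_sub (μ c σ x : ℝ) : normalPDF μ σ (x - c) = normalPDF (μ + c) σ x := by
  rw [normalPDF, normalPDF, sub_sub, add_comm]

theorem setIntegral_Iic_comp_sub_right (f : ℝ → ℝ) (a c : ℝ) :
    ∫ x in Iic a, f (x - c) = ∫ x in Iic (a - c), f x := by
  have := (measurePreserving_sub_right volume c).setIntegral_preimage_emb
    (measurableEmbedding_subRight c) f (Iic (a - c))
  rwa [preimage_sub_const_Iic, sub_add_cancel] at this

theorem hasDerivAt_erf (x : ℝ) : HasDerivAt erf (2 / √π * rexp (-x ^ 2)) x := by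
  have hcont : Continuous fun t : ℝ => rexp (-t ^ 2) := by fun_prop
  exact (hcont.integral_hasStrictDerivAt 0 x).hasDerivAt.const_mul (2 / √π)

theorem hasDerivAt_erf_div_two (μ : ℝ) {σ : ℝ} (hσ : σ ≠ 0) (x : ℝ) :
    HasDerivAt (fun x => erf ((x - μ) / (√2 * σ)) / 2) (normalPDF μ σ x) x := by
  have hinner : HasDerivAt (fun x => (x - μ) / (√2 * σ)) (1 / (√2 * σ)) x :=
    ((hasDerivAt_id x).sub_const μ).div_const _
  refine (((hasDerivAt_erf _).comp x hinner).div_const 2).congr_deriv ?_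
  have h2 : √2 ^ 2 = 2 := sq_sqrt zero_le_two
  simp only [normalPDF, sqrt_mul zero_le_two, div_pow, mul_pow, h2]
  field_simp

theorem intervalIntegral_normalPDF (μ : ℝ) {σ : ℝ} (hσ : σ ≠ 0) (a b : ℝ) :
    ∫ x in a..b, normalPDF μ σ x =
      (erf ((b - μ) / (√2 * σ)) - erf ((a - μ) / (√2 * σ))) / 2 := by
  have hcont : Continuous (normalPDF μ σ) := by unfold normalPDF; fun_prop
  rw [intervalIntegral.integral_eq_sub_of_hasDerivAt
    (fun x _ => hasDerivAt_erf_div_two μ hσ x) (hcont.intervalIntegrable a b)]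
  ring

theorem setIntegral_Iic_normalPDF_sub (μ₁ μ₂ : ℝ) {σ : ℝ} (hσ : 0 < σ) (a : ℝ) :
    ∫ x in Iic a, (normalPDF μ₁ σ x - normalPDF μ₂ σ x) =
      (erf ((a - μ₁) / (√2 * σ)) - erf ((a - μ₂) / (√2 * σ))) / 2 := by
  have hi (b : ℝ) : IntegrableOn (normalPDF μ₁ σ) (Iic b) :=
    (integrable_normalPDF μ₁ hσ).integrableOn
  have hshift :
      ∫ x in Iic a, normalPDF μ₂ σ x = ∫ x in Iic (a - (μ₂ - μ₁)), normalPDF μ₁ σ x := by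
    rw [← setIntegral_Iic_comp_sub_right]
    simp only [normalPDF_sub, add_sub_cancel]
  rw [integral_sub (hi a) (integrable_normalPDF μ₂ hσ).integrableOn, hshift,
    intervalIntegral.integral_Iic_sub_Iic (hi _) (hi a), intervalIntegral_normalPDF μ₁ hσ.ne',
    sub_sub, sub_add_cancel]

/-- The total variation distance of two normal distributions with means
    `μ₁, μ₂` and common standard deviation `σ > 0` equals
    `erf(|μ₁ - μ₂|/(2√2 σ))`. -/
theorem equal_variance_normal_tvd (μ₁ μ₂ σ : ℝ) (hσ : 0 < σ) :
    (1 / 2) * (∫ x, |normalPDF μ₁ σ x - normalPDF μ₂ σ x|) =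
      erf (|μ₁ - μ₂| / (2 * Real.sqrt 2 * σ)) := by
  wlog hμ : μ₁ ≤ μ₂ generalizing μ₁ μ₂
  · simpa only [abs_sub_comm] using this μ₂ μ₁ (le_of_not_ge hμ)
  set m := (μ₁ + μ₂) / 2 with hm
  have closer_to_μ₁ (x : ℝ) (hx : x ∈ Iic m) : |x - μ₁| ≤ |x - μ₂| :=
    sq_le_sq.1 (by nlinarith [mul_nonneg (sub_nonneg.2 hμ) (sub_nonneg.2 (mem_Iic.1 hx))])
  have closer_to_μ₂ (x : ℝ) (hx : x ∉ Iic m) : |x - μ₂| ≤ |x - μ₁| :=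
    sq_le_sq.1 (by nlinarith [mul_nonneg (sub_nonneg.2 hμ) (sub_nonneg.2 (not_le.1 hx).le)])
  have same_mass : ∫ x, normalPDF μ₁ σ x = ∫ x, normalPDF μ₂ σ x := by
    rw [integral_normalPDF_eq_one μ₁ hσ, integral_normalPDF_eq_one μ₂ hσ]
  rw [integral_abs_sub_eq_two_mul_setIntegral_sub (integrable_normalPDF μ₁ hσ)
      (integrable_normalPDF μ₂ hσ) same_mass measurableSet_Iic
      (fun x hx => normalPDF_le_normalPDF hσ.le (closer_to_μ₁ x hx))
      (fun x hx => normalPDF_le_normalPDF hσ.le (closer_to_μ₂ x hx)),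
    setIntegral_Iic_normalPDF_sub μ₁ μ₂ hσ, abs_sub_comm, abs_of_nonneg (sub_nonneg.2 hμ),
    show m - μ₂ = -(m - μ₁) by ring, neg_div, erf_neg, show m - μ₁ = (μ₂ - μ₁) / 2 by ring]
  ring_nf
end
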